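/- Let f : D → {0,1} be a partial Boolean function with D ⊆ {0,1}^M and let m ≥ 1 be an integer. Then the threshold degree of GapAND_{m,2/3}(f) is at most the positive one-sided (1/20)-approximate degree of f. Consequently, the threshold degree of GapAND_{m,2/3}(f) is O(deg⁺_{1/3}(f)). -/
import Mathlib


open MvPolynomial
open scoped Classical

noncomputable section

/-- The real value of a Boolean: `1` for `true`, `0` for `false`. -/
def bval (b : Bool) : ℝ := if b then 1 else 0

/-- Evaluation of a real multilinear polynomial at a Boolean point of `{0,1}^σ`. -/
def pEval {σ : Type*} (p : MvPolynomial σ ℝ) (x : σ → Bool) : ℝ :=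
  MvPolynomial.eval (fun i => bval (x i)) p

/-- `p` is a positive one-sided `ε`-approximation of the partial Boolean function `f`
with domain `D`. -/
def OneSidedApproxBy {σ : Type*} (D : Set (σ → Bool)) (f : (σ → Bool) → Bool) (ε : ℝ)
    (p : MvPolynomial σ ℝ) : Prop :=
  (∀ x ∈ D, f x = true → |pEval p x - 1| ≤ ε) ∧ ∀ x ∈ D, f x = false → pEval p x ≤ ε

/-- The positive one-sided `ε`-approximate degree of the partial Boolean function `f`. -/
noncomputable def odeg {σ : Type*} (D : Set (σ → Bool)) (f : (σ → Bool) → Bool) (ε : ℝ) : ℕ :=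
  sInf {d | ∃ p : MvPolynomial σ ℝ, OneSidedApproxBy D f ε p ∧ p.totalDegree = d}

/-- `p` sign-represents the partial Boolean function `f` with domain `D`. -/
def SignRep {σ : Type*} (D : Set (σ → Bool)) (f : (σ → Bool) → Bool)
    (p : MvPolynomial σ ℝ) : Prop :=
  ∀ x ∈ D, (f x = true → 0 < pEval p x) ∧ (f x = false → pEval p x < 0)

/-- The threshold degree of the partial Boolean function `f` with domain `D`. -/
noncomputable def thrDeg {σ : Type*} (D : Set (σ → Bool)) (f : (σ → Bool) → Bool) : ℕ :=
  sInf {d | ∃ p : MvPolynomial σ ℝ, SignRep D f p ∧ p.totalDegree = d}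

/-- The `i`-th block of an input in `({0,1}^σ)^n`. -/
def block {n : ℕ} {σ : Type*} (x : Fin n × σ → Bool) (i : Fin n) : σ → Bool :=
  fun j => x (i, j)

/-- Number of blocks in the domain of `f` on which `f` evaluates to `0`. -/
def gmNo {n : ℕ} {σ : Type*} (D : Set (σ → Bool)) (f : (σ → Bool) → Bool)
    (x : Fin n × σ → Bool) : ℕ :=
  Nat.card {i : Fin n // block x i ∈ D ∧ f (block x i) = false}

/-- The domain of `GapAND_{n,δ}(f)`: all blocks belong to the domain of `f`, and either all
blocks evaluate to `1`, or at least `δ·n` blocks evaluate to `0`. -/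
def gapAndDom {σ : Type*} (D : Set (σ → Bool)) (f : (σ → Bool) → Bool)
    (n : ℕ) (δ : ℝ) : Set (Fin n × σ → Bool) :=
  {x | (∀ i, block x i ∈ D) ∧
       ((∀ i, f (block x i) = true) ∨ δ * n ≤ (gmNo D f x : ℝ))}

/-- The value function of `GapAND_{n,δ}(f)` (meaningful on `gapAndDom`). -/
noncomputable def gapAndFun {σ : Type*} (D : Set (σ → Bool)) (f : (σ → Bool) → Bool)
    (n : ℕ) (δ : ℝ) : (Fin n × σ → Bool) → Bool :=
  fun x => if ∀ i, f (block x i) = true then true else false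


/-- indicator polynomial of a point of the cube -/
def indPoly {M : ℕ} (y : Fin M → Bool) : MvPolynomial (Fin M) ℝ :=
  ∏ j, if y j then X j else 1 - X j

lemma pEval_indPoly {M : ℕ} (y x : Fin M → Bool) :
    pEval (indPoly y) x = if x = y then 1 else 0 := by
  have h : pEval (indPoly y) x = ∏ j, (if x j = y j then (1:ℝ) else 0) := by
    simp only [pEval, indPoly, map_prod]
    refine Finset.prod_congr rfl fun j _ => ?_
    cases hy : y j <;> cases hx : x j <;> simp [hy, hx, bval]
  rw [h, Finset.prod_boole]
  by_cases hxy : x = y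
  · simp [hxy]
  · rw [if_neg hxy, if_neg]
    intro hall
    exact hxy (funext fun j => hall j (Finset.mem_univ j))

lemma odeg_set_nonempty {M : ℕ} (D : Set (Fin M → Bool)) (f : (Fin M → Bool) → Bool)
    (ε : ℝ) (hε : 0 ≤ ε) :
    {d | ∃ p : MvPolynomial (Fin M) ℝ, OneSidedApproxBy D f ε p ∧ p.totalDegree = d}.Nonempty := by
  set p : MvPolynomial (Fin M) ℝ :=
    ∑ y ∈ Finset.univ.filter (fun y => f y = true), indPoly y with hp
  refine ⟨p.totalDegree, p, ⟨?_, ?_⟩, rfl⟩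
  · intro x _ hx
    have : pEval p x = 1 := by
      simp only [hp, pEval, map_sum]
      have := fun y : Fin M → Bool => pEval_indPoly y x
      simp only [pEval] at this
      rw [Finset.sum_congr rfl fun y _ => this y]
      rw [Finset.sum_ite_eq (Finset.univ.filter (fun y => f y = true)) x (fun _ => (1:ℝ))]
      simp [hx]
    simp [this, hε]
  · intro x _ hx
    have : pEval p x = 0 := by
      simp only [hp, pEval, map_sum]
      have := fun y : Fin M → Bool => pEval_indPoly y x
      simp only [pEval] at this
      rw [Finset.sum_congr rfl fun y _ => this y]
      rw [Finset.sum_ite_eq (Finset.univ.filter (fun y => f y = true)) x (fun _ => (1:ℝ))]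
      simp [hx]
    simp [this, hε]

lemma exists_odeg {M : ℕ} (D : Set (Fin M → Bool)) (f : (Fin M → Bool) → Bool)
    (ε : ℝ) (hε : 0 ≤ ε) :
    ∃ p : MvPolynomial (Fin M) ℝ, OneSidedApproxBy D f ε p ∧ p.totalDegree = odeg D f ε :=
  Nat.sInf_mem (odeg_set_nonempty D f ε hε)

lemma thrDeg_le {σ : Type*} (D : Set (σ → Bool)) (f : (σ → Bool) → Bool)
    (q : MvPolynomial σ ℝ) (hq : SignRep D f q) {d : ℕ} (hd : q.totalDegree ≤ d) :
    thrDeg D f ≤ d :=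
  le_trans (Nat.sInf_le ⟨q, hq, rfl⟩) hd

/-- the key construction -/
lemma main_con {M m : ℕ} (hm : 1 ≤ m) (D : Set (Fin M → Bool)) (f : (Fin M → Bool) → Bool)
    (p : MvPolynomial (Fin M) ℝ) (hp : OneSidedApproxBy D f (1/20) p) :
    thrDeg (gapAndDom D f m (2/3)) (gapAndFun D f m (2/3)) ≤ p.totalDegree := by
  set q : MvPolynomial (Fin m × Fin M) ℝ :=
    (∑ i : Fin m, rename (Prod.mk i) p) - C ((2:ℝ)/3 * m) with hq
  have hqdeg : q.totalDegree ≤ p.totalDegree := by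
    rw [hq]
    refine le_trans (totalDegree_sub _ _) ?_
    rw [totalDegree_C, Nat.max_zero]
    exact totalDegree_finsetSum_le fun i _ => totalDegree_rename_le _ _
  have hqeval : ∀ x : Fin m × Fin M → Bool,
      pEval q x = (∑ i : Fin m, pEval p (block x i)) - (2:ℝ)/3 * m := by
    intro x
    simp only [hq, pEval, map_sub, map_sum, eval_C, eval_rename]
    rfl
  have hm' : (1:ℝ) ≤ m := by exact_mod_cast hm
  refine thrDeg_le _ _ q ?_ hqdeg
  intro x hx
  obtain ⟨hD, hor⟩ := hx
  constructor
  · intro htrue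
    have hall : ∀ i, f (block x i) = true := by
      by_contra hcon
      simp [gapAndFun, hcon] at htrue
    have hlow : ∀ i : Fin m, (19:ℝ)/20 ≤ pEval p (block x i) := by
      intro i
      have := hp.1 (block x i) (hD i) (hall i)
      have := abs_le.1 this
      linarith [this.1]
    have hsum : (m:ℝ) * (19/20) ≤ ∑ i : Fin m, pEval p (block x i) := by
      calc (m:ℝ) * (19/20) = ∑ _i : Fin m, (19:ℝ)/20 := by simp [mul_comm]
        _ ≤ _ := Finset.sum_le_sum fun i _ => hlow i
    rw [hqeval]
    nlinarith
  · intro hfalse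
    have hnotall : ¬ ∀ i, f (block x i) = true := by
      intro hall; simp [gapAndFun, hall] at hfalse
    have hgm : (2:ℝ)/3 * m ≤ (gmNo D f x : ℝ) := hor.resolve_left hnotall
    set T : Finset (Fin m) := Finset.univ.filter (fun i => f (block x i) = false) with hT
    have hcard : gmNo D f x = T.card := by
      rw [gmNo, Nat.card_eq_fintype_card, Fintype.card_subtype]
      congr 1
      apply Finset.filter_congr
      intro i _
      simp [hD i]
    have hsum : ∑ i : Fin m, pEval p (block x i)
        ≤ (T.card : ℝ) * (1/20) + ((m:ℝ) - T.card) * (21/20) := by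
      rw [← Finset.sum_filter_add_sum_filter_not Finset.univ (fun i => f (block x i) = false)]
      have h1 : ∑ i ∈ T, pEval p (block x i) ≤ (T.card : ℝ) * (1/20) := by
        calc ∑ i ∈ T, pEval p (block x i) ≤ ∑ _i ∈ T, (1:ℝ)/20 :=
              Finset.sum_le_sum fun i hi => by
                exact hp.2 (block x i) (hD i) (by simpa [hT] using hi)
          _ = (T.card : ℝ) * (1/20) := by simp [mul_comm]
      have h2 : ∑ i ∈ Finset.univ.filter (fun i => ¬ f (block x i) = false),
          pEval p (block x i) ≤ ((m:ℝ) - T.card) * (21/20) := by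
        have hc : ((Finset.univ.filter (fun i => ¬ f (block x i) = false)).card : ℝ)
            = (m:ℝ) - T.card := by
          have := Finset.card_filter_add_card_filter_not
            (s := (Finset.univ : Finset (Fin m))) (p := fun i => f (block x i) = false)
          have hmc : T.card + (Finset.univ.filter (fun i => ¬ f (block x i) = false)).card = m := by
            simpa [hT] using this
          have := congrArg (fun n : ℕ => (n:ℝ)) hmc
          push_cast at this
          linarith
        calc ∑ i ∈ Finset.univ.filter (fun i => ¬ f (block x i) = false), pEval p (block x i)
            ≤ ∑ _i ∈ Finset.univ.filter (fun i => ¬ f (block x i) = false), (21:ℝ)/20 := by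
              refine Finset.sum_le_sum fun i hi => ?_
              have hit : f (block x i) = true := by
                have := (Finset.mem_filter.1 hi).2
                simpa using this
              have := abs_le.1 (hp.1 (block x i) (hD i) hit)
              linarith [this.2]
          _ = ((Finset.univ.filter (fun i => ¬ f (block x i) = false)).card : ℝ) * (21/20) := by
              simp [mul_comm]
          _ = ((m:ℝ) - T.card) * (21/20) := by rw [hc]
      linarith
    have hTm : (T.card : ℝ) ≤ m := by
      exact_mod_cast (Finset.card_le_card (Finset.filter_subset _ _)).trans_eq (by simp)
    rw [hqeval]
    rw [hcard] at hgm
    push_cast at hgm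
    nlinarith

/-- amplification: from a 1/3-approximation to a 1/20-approximation with 6× degree. -/
lemma amplify {M : ℕ} (D : Set (Fin M → Bool)) (f : (Fin M → Bool) → Bool)
    (p : MvPolynomial (Fin M) ℝ) (hp : OneSidedApproxBy D f (1/3) p) :
    ∃ p' : MvPolynomial (Fin M) ℝ, OneSidedApproxBy D f (1/20) p' ∧
      p'.totalDegree ≤ 6 * p.totalDegree := by
  refine ⟨1 - C 20 * (p - 1)^6, ⟨?_, ?_⟩, ?_⟩
  · intro x hx hfx
    have h := abs_le.1 (hp.1 x hx hfx)
    have he : pEval (1 - C 20 * (p - 1)^6) x = 1 - 20 * (pEval p x - 1)^6 := by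
      simp [pEval, map_sub, map_pow, map_one]
    rw [he]
    set t := pEval p x with ht
    rw [abs_le]
    constructor
    · have h6 : (t - 1)^6 ≤ (1/3:ℝ)^6 := by
        have : |t - 1| ≤ 1/3 := abs_le.2 ⟨by linarith [h.1], by linarith [h.2]⟩
        calc (t-1)^6 = |t-1|^6 := by rw [← abs_pow, abs_of_nonneg (by positivity)]
          _ ≤ (1/3:ℝ)^6 := pow_le_pow_left₀ (abs_nonneg _) this 6
      nlinarith
    · nlinarith [pow_nonneg (sq_nonneg (t-1)) 3, sq_nonneg ((t-1)^3)]
  · intro x hx hfx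
    have h := hp.2 x hx hfx
    have he : pEval (1 - C 20 * (p - 1)^6) x = 1 - 20 * (pEval p x - 1)^6 := by
      simp [pEval, map_sub, map_pow, map_one]
    rw [he]
    set t := pEval p x with ht
    have h6 : (2/3:ℝ)^6 ≤ (t - 1)^6 := by
      have h1 : (2/3:ℝ) ≤ |t - 1| := by
        rw [abs_sub_comm, abs_of_nonneg (by linarith)]
        linarith
      calc (2/3:ℝ)^6 ≤ |t-1|^6 := pow_le_pow_left₀ (by norm_num) h1 6
        _ = (t-1)^6 := by rw [← abs_pow, abs_of_nonneg (by positivity)]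
    nlinarith
  · calc (1 - C 20 * (p - 1)^6).totalDegree
        ≤ max (1 : MvPolynomial (Fin M) ℝ).totalDegree (C 20 * (p-1)^6).totalDegree :=
          totalDegree_sub _ _
      _ ≤ 6 * p.totalDegree := by
          rw [totalDegree_one, Nat.zero_max]
          calc (C 20 * (p-1)^6).totalDegree
                ≤ (C (20:ℝ)).totalDegree + ((p-1)^6).totalDegree := totalDegree_mul _ _
            _ ≤ 6 * p.totalDegree := by
                rw [totalDegree_C, zero_add]
                refine le_trans (totalDegree_pow _ _) ?_
                exact Nat.mul_le_mul_left 6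
                  ((totalDegree_sub _ _).trans (by simp [totalDegree_one]))


/-- The threshold degree of `GapAND_{m,2/3}(f)` is at most the positive
one-sided `1/20`-approximate degree of `f`; consequently it is `O(deg⁺_{1/3}(f))`. -/
theorem stmt8 :
    ∃ C : ℝ, 0 < C ∧
      ∀ (M : ℕ) (D : Set (Fin M → Bool)) (f : (Fin M → Bool) → Bool) (m : ℕ), 1 ≤ m →
        thrDeg (gapAndDom D f m (2/3)) (gapAndFun D f m (2/3)) ≤ odeg D f (1/20) ∧
        (thrDeg (gapAndDom D f m (2/3)) (gapAndFun D f m (2/3)) : ℝ)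
          ≤ C * odeg D f (1/3) := by
  refine ⟨6, by norm_num, fun M D f m hm => ?_⟩
  constructor
  · obtain ⟨p, hp, hdeg⟩ := exists_odeg D f (1/20) (by norm_num)
    exact hdeg ▸ main_con hm D f p hp
  · obtain ⟨p, hp, hdeg⟩ := exists_odeg D f (1/3) (by norm_num)
    obtain ⟨p', hp', hdeg'⟩ := amplify D f p hp
    have h1 := main_con hm D f p' hp'
    have : thrDeg (gapAndDom D f m (2/3)) (gapAndFun D f m (2/3)) ≤ 6 * odeg D f (1/3) := by
      calc _ ≤ p'.totalDegree := main_con hm D f p' hp'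
        _ ≤ 6 * p.totalDegree := hdeg'
        _ = 6 * odeg D f (1/3) := by rw [hdeg]
    have hr : ((thrDeg (gapAndDom D f m (2/3)) (gapAndFun D f m (2/3)) : ℕ) : ℝ)
        ≤ ((6 * odeg D f (1/3) : ℕ) : ℝ) := Nat.cast_le.2 this
    push_cast at hr
    exact hr
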